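/- arXiv:1804.07051 — 2 statements merged into one kernel-verified Lean document; each statement's English description precedes it below -/
import Mathlib

section
/- Let α > 0, ε > 0, P > 0. For c ∈ ℝ define p(c) := min(max(ε·c/(2·α), 0), P) and F(p, c) := (α/ε)·p² − c·p. Then for all c, ĉ ∈ ℝ, 0 ≤ F(p(ĉ), c) − F(p(c), c) ≤ (ε/(2·α))·(c − ĉ)². -/
/-- The quadratic queue-price objective `F(p, c) = (α/ε)·p² − c·p`. -/
noncomputable def qpObjective (α ε p c : ℝ) : ℝ := (α / ε) * p ^ 2 - c * p

/-- The clamped minimizer `p(c) = clamp(ε·c/(2·α); [0, P])`. -/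
noncomputable def qpMinimizer (α ε P c : ℝ) : ℝ := min (max (ε * c / (2 * α)) 0) P

/-!
Completing the square, `F(p, c) = (α/ε)·((p − u)² − u²)` with `u = ε·c/(2·α)`, so `p(c)`, the
point of `[0, P]` nearest to `u`, minimizes `F(·, c)` on `[0, P]`; this gives the lower bound.
For the upper bound, `F(p, c) − F(p, ĉ) = (ĉ − c)·p` and `p(ĉ)` minimizes `F(·, ĉ)`, so
`F(p(ĉ), c) − F(p(c), c) ≤ (c − ĉ)·(p(c) − p(ĉ))`, and the clamp is `(ε/(2·α))`-Lipschitz in `c`.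
-/

open Set

section Clamp

variable {G : Type*} [AddCommGroup G] [LinearOrder G] [IsOrderedAddMonoid G]

theorem abs_min_max_sub_min_max_le (a b lo hi : G) :
    |min (max a lo) hi - min (max b lo) hi| ≤ |a - b| := by
  refine (abs_min_sub_min_le_max _ _ _ _).trans ?_
  rw [sub_self, abs_zero, max_eq_left (abs_nonneg _)]
  exact abs_max_sub_max_le_abs a b lo

theorem abs_min_max_sub_le {a x lo hi : G} (hx : x ∈ Icc lo hi) :
    |min (max a lo) hi - a| ≤ |x - a| := by
  obtain ⟨hlo, hhi⟩ := hx
  rcases le_total a lo with ha | ha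
  · rw [max_eq_right ha, min_eq_left (hlo.trans hhi), abs_of_nonneg (sub_nonneg.2 ha),
      abs_of_nonneg (sub_nonneg.2 (ha.trans hlo))]
    exact sub_le_sub_right hlo a
  rcases le_total a hi with ha' | ha'
  · rw [max_eq_left ha, min_eq_left ha', sub_self, abs_zero]
    exact abs_nonneg _
  · rw [max_eq_left ha, min_eq_right ha', abs_of_nonpos (sub_nonpos.2 ha'),
      abs_of_nonpos (sub_nonpos.2 (hhi.trans ha'))]
    exact neg_le_neg (sub_le_sub_right hhi a)

end Clamp

theorem IsMinOn.sub_mul_sub_le {g : ℝ → ℝ} {s : Set ℝ} {c ĉ p q : ℝ}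
    (hq : IsMinOn (fun x => g x - ĉ * x) s q) (hp : p ∈ s) :
    (g q - c * q) - (g p - c * p) ≤ (c - ĉ) * (p - q) := by
  have := isMinOn_iff.1 hq p hp
  linarith

section Quadratic

variable {α ε P : ℝ}

theorem qpObjective_eq (hα : α ≠ 0) (hε : ε ≠ 0) (p c : ℝ) :
    qpObjective α ε p c = α / ε * ((p - ε * c / (2 * α)) ^ 2 - (ε * c / (2 * α)) ^ 2) := by
  unfold qpObjective
  field_simp
  ring

theorem qpMinimizer_mem_Icc (hP : 0 ≤ P) (c : ℝ) : qpMinimizer α ε P c ∈ Icc 0 P :=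
  ⟨le_min (le_max_right _ _) hP, min_le_right _ _⟩

theorem isMinOn_qpMinimizer (hα : 0 < α) (hε : 0 < ε) (c : ℝ) :
    IsMinOn (fun p => qpObjective α ε p c) (Icc 0 P) (qpMinimizer α ε P c) := by
  refine isMinOn_iff.2 fun x hx => ?_
  rw [qpObjective_eq hα.ne' hε.ne', qpObjective_eq hα.ne' hε.ne']
  gcongr α / ε * (?_ - _)
  exact sq_le_sq.2 (abs_min_max_sub_le hx)

theorem abs_qpMinimizer_sub_le (hα : 0 < α) (hε : 0 < ε) (c ĉ : ℝ) :
    |qpMinimizer α ε P c - qpMinimizer α ε P ĉ| ≤ ε / (2 * α) * |c - ĉ| := by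
  refine (abs_min_max_sub_min_max_le _ _ _ _).trans_eq ?_
  rw [← abs_of_pos (by positivity : 0 < ε / (2 * α)), ← abs_mul]
  ring_nf

end Quadratic

/-- Perturbation lemma for the clamped quadratic minimizer: evaluating
`F(·, c)` at the minimizer computed from an approximated backlog `chat`
incurs an optimality loss of at most `(ε/(2·α))·(c − chat)²`. -/
theorem clamped_quadratic_perturbation
    (α ε P : ℝ) (hα : 0 < α) (hε : 0 < ε) (hP : 0 < P) :
    ∀ c chat : ℝ,
      0 ≤ qpObjective α ε (qpMinimizer α ε P chat) c
            - qpObjective α ε (qpMinimizer α ε P c) c ∧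
      qpObjective α ε (qpMinimizer α ε P chat) c
            - qpObjective α ε (qpMinimizer α ε P c) c
        ≤ (ε / (2 * α)) * (c - chat) ^ 2 := by
  intro c chat
  have hmin := isMinOn_qpMinimizer (P := P) hα hε
  have hmem := qpMinimizer_mem_Icc (α := α) (ε := ε) hP.le
  refine ⟨sub_nonneg.2 (isMinOn_iff.1 (hmin c) _ (hmem chat)), ?_⟩
  calc _ ≤ (c - chat) * (qpMinimizer α ε P c - qpMinimizer α ε P chat) :=
        (hmin chat).sub_mul_sub_le (hmem c)
    _ ≤ |c - chat| * |qpMinimizer α ε P c - qpMinimizer α ε P chat| := by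
        rw [← abs_mul]
        exact le_abs_self _
    _ ≤ |c - chat| * (ε / (2 * α) * |c - chat|) := by
        gcongr
        exact abs_qpMinimizer_sub_le hα hε c chat
    _ = ε / (2 * α) * (c - chat) ^ 2 := by
        rw [← sq_abs (c - chat)]
        ring
end

section
/- (Bound (34a).) Let α > 0, ε > 0, P > 0, T_Δ a positive natural number, and ω_Q, ω_q ≥ 0. Let Q, Q̂, q, q̂ be real numbers with |Q − Q̂| ≤ T_Δ·ω_Q and |q − q̂| ≤ T_Δ·ω_q. Define p(c) := min(max(ε·c/(2·α), 0), P) and F(p, c) := (α/ε)·p² − c·p. Then |F(p(Q̂ − q̂), Q − q) − F(p(Q − q), Q − q)| ≤ (ε/(2·α))·(T_Δ·ω_Q + T_Δ·ω_q)². -/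
lemma clamp_lipschitz (P a b : ℝ) :
    |min (max a 0) P - min (max b 0) P| ≤ |a - b| := by
  have h1 : |max a 0 - max b 0| ≤ |a - b| := abs_max_sub_max_le_abs a b 0
  have h2 : |min (max a 0) P - min (max b 0) P| ≤ |max a 0 - max b 0| := by
    rcases le_total (max a 0) P with h | h <;> rcases le_total (max b 0) P with h' | h' <;>
      simp [min_eq_left, min_eq_right, h, h'] <;> rw [abs_le] <;>
      constructor <;> cases abs_cases (max a 0 - max b 0) <;> linarith
  linarith

/-- Projection property of the clamp onto `[0, P]`. -/
lemma proj_prop (P m x : ℝ) (hx0 : 0 ≤ x) (hxP : x ≤ P) (hP : 0 ≤ P) :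
    (x - min (max m 0) P) * (m - min (max m 0) P) ≤ 0 := by
  rcases le_total m 0 with h | h
  · rw [max_eq_right h, min_eq_left hP]
    nlinarith
  · rw [max_eq_left h]
    rcases le_total m P with h' | h'
    · rw [min_eq_left h']; simp
    · rw [min_eq_right h']; nlinarith

/-- The clamp minimizes the objective over `[0, P]`. -/
lemma qp_min (α ε P : ℝ) (hα : 0 < α) (hε : 0 < ε) (hP : 0 < P)
    (c x : ℝ) (hx0 : 0 ≤ x) (hxP : x ≤ P) :
    qpObjective α ε (qpMinimizer α ε P c) c ≤ qpObjective α ε x c := by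
  set m : ℝ := ε * c / (2 * α) with hm
  have hproj : (x - min (max m 0) P) * (m - min (max m 0) P) ≤ 0 :=
    proj_prop P m x hx0 hxP hP.le
  have hc : c = 2 * α * m / ε := by rw [hm]; field_simp
  rw [qpObjective, qpObjective, qpMinimizer, ← hm, hc]
  set p : ℝ := min (max m 0) P with hp
  rw [← sub_nonneg]
  have key : (p - m) ^ 2 ≤ (x - m) ^ 2 := by nlinarith
  have hid : (α / ε) * x ^ 2 - 2 * α * m / ε * x - ((α / ε) * p ^ 2 - 2 * α * m / ε * p)
      = (α / ε) * ((x - m) ^ 2 - (p - m) ^ 2) := by field_simp; ring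
  have hmul : 0 ≤ (α / ε) * ((x - m) ^ 2 - (p - m) ^ 2) :=
    mul_nonneg (by positivity) (by linarith)
  linarith

lemma qp_loss (α ε P : ℝ) (hα : 0 < α) (hε : 0 < ε) (hP : 0 < P) (c ch : ℝ) :
    |qpObjective α ε (qpMinimizer α ε P ch) c - qpObjective α ε (qpMinimizer α ε P c) c|
      ≤ (ε / (2 * α)) * (ch - c) ^ 2 := by
  set p : ℝ := qpMinimizer α ε P c with hp
  set ph : ℝ := qpMinimizer α ε P ch with hph
  have hp0 : 0 ≤ p := le_min (le_max_right _ _) hP.le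
  have hpP : p ≤ P := min_le_right _ _
  have hph0 : 0 ≤ ph := le_min (le_max_right _ _) hP.le
  have hphP : ph ≤ P := min_le_right _ _
  have hnn : 0 ≤ qpObjective α ε ph c - qpObjective α ε p c :=
    sub_nonneg.mpr (qp_min α ε P hα hε hP c ph hph0 hphP)
  have hmin : qpObjective α ε ph ch - qpObjective α ε p ch ≤ 0 :=
    sub_nonpos.mpr (qp_min α ε P hα hε hP ch p hp0 hpP)
  have hid : qpObjective α ε ph c - qpObjective α ε p c
      = (qpObjective α ε ph ch - qpObjective α ε p ch) + (ch - c) * (ph - p) := by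
    simp only [qpObjective]; ring
  have hdm : |ph - p| ≤ (ε / (2 * α)) * |ch - c| := by
    have h1 : |ph - p| ≤ |ε * ch / (2 * α) - ε * c / (2 * α)| :=
      clamp_lipschitz P _ _
    have h2 : ε * ch / (2 * α) - ε * c / (2 * α) = (ε / (2 * α)) * (ch - c) := by ring
    rw [h2, abs_mul, abs_of_pos (by positivity : (0:ℝ) < ε / (2 * α))] at h1
    exact h1
  have hgap : qpObjective α ε ph c - qpObjective α ε p c ≤ |ch - c| * |ph - p| := by
    rw [hid]
    have : (ch - c) * (ph - p) ≤ |ch - c| * |ph - p| := by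
      rw [← abs_mul]; exact le_abs_self _
    linarith
  rw [abs_of_nonneg hnn]
  calc qpObjective α ε ph c - qpObjective α ε p c
      ≤ |ch - c| * |ph - p| := hgap
    _ ≤ |ch - c| * ((ε / (2 * α)) * |ch - c|) :=
        mul_le_mul_of_nonneg_left hdm (abs_nonneg _)
    _ = (ε / (2 * α)) * (ch - c) ^ 2 := by
        rw [← sq_abs (ch - c)]; ring

/-- Bound (34a): optimality loss of the processing objective `f₁` caused by
using the window-start backlog approximations. -/
theorem processing_objective_loss_bound
    (α ε P : ℝ) (hα : 0 < α) (hε : 0 < ε) (hP : 0 < P)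
    (TΔ : ℕ) (hTΔ : 0 < TΔ)
    (ωQ ωq : ℝ) (hωQ : 0 ≤ ωQ) (hωq : 0 ≤ ωq)
    (Q Qhat q qhat : ℝ)
    (hQ : |Q - Qhat| ≤ (TΔ : ℝ) * ωQ)
    (hq : |q - qhat| ≤ (TΔ : ℝ) * ωq) :
    |qpObjective α ε (qpMinimizer α ε P (Qhat - qhat)) (Q - q)
        - qpObjective α ε (qpMinimizer α ε P (Q - q)) (Q - q)|
      ≤ (ε / (2 * α)) * ((TΔ : ℝ) * ωQ + (TΔ : ℝ) * ωq) ^ 2 := by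
  have h1 := qp_loss α ε P hα hε hP (Q - q) (Qhat - qhat)
  have h2 : |(Qhat - qhat) - (Q - q)| ≤ (TΔ : ℝ) * ωQ + (TΔ : ℝ) * ωq := by
    calc |(Qhat - qhat) - (Q - q)| = |(Qhat - Q) + (q - qhat)| := by ring_nf
      _ ≤ |Qhat - Q| + |q - qhat| := abs_add_le _ _
      _ ≤ (TΔ : ℝ) * ωQ + (TΔ : ℝ) * ωq := by
          rw [abs_sub_comm Qhat Q]; exact add_le_add hQ hq
  have h3 : ((Qhat - qhat) - (Q - q)) ^ 2 ≤ ((TΔ : ℝ) * ωQ + (TΔ : ℝ) * ωq) ^ 2 := by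
    rw [← sq_abs]
    exact pow_le_pow_left₀ (abs_nonneg _) h2 2
  calc |qpObjective α ε (qpMinimizer α ε P (Qhat - qhat)) (Q - q)
        - qpObjective α ε (qpMinimizer α ε P (Q - q)) (Q - q)|
      ≤ (ε / (2 * α)) * ((Qhat - qhat) - (Q - q)) ^ 2 := h1
    _ ≤ (ε / (2 * α)) * ((TΔ : ℝ) * ωQ + (TΔ : ℝ) * ωq) ^ 2 :=
        mul_le_mul_of_nonneg_left h3 (by positivity)
end
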